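/- arXiv:2305.17587 — 4 statements merged into one kernel-verified Lean document; each statement's English description precedes it below -/
import Mathlib

section
/- Let p be a prime and let S ≤ Σ_{p²} be the subgroup generated by the p-cycles σ_i = (ip+1, …, (i+1)p) for i = 0,…,p−1 together with τ = τ_0⋯τ_{p−1} where τ_i = (i+1, i+1+p, …, i+1+p(p−1)). Let K be the subgroup generated by σ_0,…,σ_{p−1}. Then every element of S − K acts on {1,…,p²} without fixed points. -/
/-!
Conjugation by `τ` permutes the generators `σ_i` of `K` cyclically, so `τ` normalizes `K` and every
element of `S = K ⊔ ⟨τ⟩` is of the form `k τⁿ` with `k ∈ K`. Elements of `K` preserve each block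
`{i} × ZMod p`, while `τⁿ` shifts the blocks by `n`; so if `k τⁿ` fixes a point then `n ≡ 0 (mod p)`,
whence `τⁿ = 1` and `k τⁿ ∈ K`.
-/

def sigma (p : ℕ) (i : ZMod p) : Equiv.Perm (ZMod p × ZMod p) where
  toFun x := (x.1, if x.1 = i then x.2 + 1 else x.2)
  invFun x := (x.1, if x.1 = i then x.2 - 1 else x.2)
  left_inv x := by by_cases h : x.1 = i <;> simp [h] <;> exact Prod.ext h.symm rfl
  right_inv x := by by_cases h : x.1 = i <;> simp [h] <;> exact Prod.ext h.symm rfl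

def tau (p : ℕ) : Equiv.Perm (ZMod p × ZMod p) :=
  (Equiv.addLeft (1 : ZMod p)).prodCongr (Equiv.refl (ZMod p))

def Ssub (p : ℕ) : Subgroup (Equiv.Perm (ZMod p × ZMod p)) :=
  Subgroup.closure (insert (tau p) (Set.range (sigma p)))

def Ksub (p : ℕ) : Subgroup (Equiv.Perm (ZMod p × ZMod p)) :=
  Subgroup.closure (Set.range (sigma p))

open Subgroup

variable {p : ℕ}

lemma sigma_apply (i : ZMod p) (pt : ZMod p × ZMod p) :
    sigma p i pt = (pt.1, if pt.1 = i then pt.2 + 1 else pt.2) := rfl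

lemma tau_apply (pt : ZMod p × ZMod p) : tau p pt = (1 + pt.1, pt.2) := rfl

lemma tau_inv_apply (pt : ZMod p × ZMod p) : (tau p)⁻¹ pt = (-1 + pt.1, pt.2) := rfl

lemma tau_zpow_apply (n : ℤ) (pt : ZMod p × ZMod p) :
    (tau p ^ n) pt = (pt.1 + n, pt.2) := by
  induction n using Int.induction_on generalizing pt with
  | zero => simp
  | succ n ih =>
    rw [zpow_add_one, Equiv.Perm.mul_apply, ih, tau_apply]
    push_cast
    ring_nf
  | pred n ih =>
    rw [zpow_sub_one, Equiv.Perm.mul_apply, ih, tau_inv_apply]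
    push_cast
    ring_nf

lemma tau_zpow_eq_one {n : ℤ} (hn : (n : ZMod p) = 0) : tau p ^ n = 1 :=
  Equiv.ext fun pt => by rw [tau_zpow_apply, hn, add_zero]; rfl

lemma conj_tau_sigma (i : ZMod p) : MulAut.conj (tau p) (sigma p i) = sigma p (i + 1) := by
  ext pt : 1
  simp only [MulAut.conj_apply, Equiv.Perm.mul_apply, tau_inv_apply, sigma_apply, tau_apply,
    neg_add_eq_iff_eq_add, add_comm (1 : ZMod p) i]
  ring_nf

lemma tau_mem_normalizer_Ksub :
    tau p ∈ normalizer (Ksub p : Set (Equiv.Perm (ZMod p × ZMod p))) := by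
  rw [mem_normalizer_iff_map_conj_eq, Ksub, MonoidHom.map_closure, ← Set.range_comp]
  congr 1
  convert (Equiv.addRight (1 : ZMod p)).surjective.range_comp (sigma p) using 2
  exact funext conj_tau_sigma

lemma Ssub_eq_Ksub_sup_zpowers : Ssub p = Ksub p ⊔ zpowers (tau p) := by
  rw [Ssub, Ksub, Set.insert_eq, Subgroup.closure_union, zpowers_eq_closure, sup_comm]

lemma exists_mul_tau_zpow_of_mem_Ssub {x : Equiv.Perm (ZMod p × ZMod p)} (hx : x ∈ Ssub p) :
    ∃ k ∈ Ksub p, ∃ n : ℤ, k * tau p ^ n = x := by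
  rw [Ssub_eq_Ksub_sup_zpowers, ← SetLike.mem_coe, coe_mul_of_right_le_normalizer_left _ _
    (zpowers_le.2 tau_mem_normalizer_Ksub)] at hx
  obtain ⟨k, hk, t, ⟨n, rfl⟩, rfl⟩ := hx
  exact ⟨k, hk, n, rfl⟩

lemma fst_apply_of_mem_Ksub {k : Equiv.Perm (ZMod p × ZMod p)} (hk : k ∈ Ksub p)
    (pt : ZMod p × ZMod p) : (k pt).1 = pt.1 := by
  induction hk using closure_induction generalizing pt with
  | mem _ hx => obtain ⟨i, rfl⟩ := hx; rfl
  | one => rfl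
  | mul a b _ _ ha hb => rw [Equiv.Perm.mul_apply, ha, hb]
  | inv a _ ha => simpa using (ha (a⁻¹ pt)).symm

theorem stmt0_general (p : ℕ) :
    ∀ x : Equiv.Perm (ZMod p × ZMod p), x ∈ Ssub p → x ∉ Ksub p →
      ∀ pt : ZMod p × ZMod p, x pt ≠ pt := by
  intro x hx hxK pt hfix
  obtain ⟨k, hk, n, rfl⟩ := exists_mul_tau_zpow_of_mem_Ssub hx
  have hshift : pt.1 + n = pt.1 := by
    simpa only [Equiv.Perm.mul_apply, fst_apply_of_mem_Ksub hk, tau_zpow_apply]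
      using congrArg Prod.fst hfix
  rw [tau_zpow_eq_one (add_eq_left.1 hshift), mul_one] at hxK
  exact hxK hk

/-- every element of S − K acts on the p² points without fixed points. -/
theorem stmt0 (p : ℕ) [Fact p.Prime] :
    ∀ x : Equiv.Perm (ZMod p × ZMod p), x ∈ Ssub p → x ∉ Ksub p →
      ∀ pt : ZMod p × ZMod p, x pt ≠ pt :=
  stmt0_general p
end

section
/- Let p be a prime and let S ≅ Z/p ≀ Z/p be the p-Sylow subgroup of Σ_{p²} with base K generated by disjoint p-cycles σ_0,…,σ_{p−1} and top cycle τ. Every element of S − K is either a p²-cycle or a product of p disjoint p-cycles (as a permutation of {1,…,p²}). -/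
/-!
An element `x` of `S` acts by `(a, b) ↦ (a + n, b + f a)`, and it lies in `K` exactly
when `n = 0`. For `n ≠ 0`, `x` has no fixed point, and since `a + k • n` runs once through
`ZMod p` as `k < p`, its `p`-th power is the shift `(a, b) ↦ (a, b + ∑ f)`. If `∑ f = 0`
then `x ^ p = 1`, so `x` is a product of `p` disjoint `p`-cycles; otherwise `x` has order
`p²` on `p²` points and is a `p²`-cycle.
-/

open Equiv Finset

namespace Equiv.Perm

variable {α : Type*} [Fintype α] [DecidableEq α] {σ : Perm α} {p : ℕ}

theorem cycleType_eq_replicate_of_pow_prime_eq_one [Fact p.Prime] (hσ : σ ^ p = 1) :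
    σ.cycleType = Multiset.replicate (#σ.support / p) p := by
  have hσ' := cycleType_of_pow_prime_eq_one hσ
  have hsum := σ.sum_cycleType
  rw [hσ', Multiset.sum_replicate, smul_eq_mul] at hsum
  rwa [← hsum, Nat.mul_div_cancel _ (Fact.out : p.Prime).pos]

theorem isCycle_of_mem_cycleType_of_card_support_le {n : ℕ} (hn : n ∈ σ.cycleType)
    (hcard : #σ.support ≤ n) : σ.IsCycle := by
  rw [← card_cycleType_eq_one, ← Multiset.cons_erase hn, Multiset.card_cons,
    add_eq_right, Multiset.card_eq_zero, Multiset.eq_zero_iff_forall_notMem]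
  intro m hm
  have hsum := σ.sum_cycleType
  rw [← Multiset.cons_erase hn, Multiset.sum_cons] at hsum
  have := Multiset.le_sum_of_mem hm
  have := two_le_of_mem_cycleType (Multiset.mem_of_mem_erase hm)
  omega

theorem isCycle_of_pow_prime_sq_eq_one [Fact p.Prime] (hσ : σ ^ p ^ 2 = 1)
    (hσp : σ ^ p ≠ 1) (hcard : #σ.support ≤ p ^ 2) : σ.IsCycle := by
  obtain ⟨c, hc, hcp⟩ : ∃ c ∈ σ.cycleType, c ≠ p := by
    simpa using mt pow_prime_eq_one_iff.mpr hσp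
  refine isCycle_of_mem_cycleType_of_card_support_le hc (hcard.trans_eq ?_)
  obtain ⟨i, hi, rfl⟩ := (Nat.dvd_prime_pow Fact.out).mp
    ((dvd_of_mem_cycleType hc).trans (orderOf_dvd_of_pow_eq_one hσ))
  interval_cases i
  · exact absurd (one_lt_of_mem_cycleType hc) (by simp)
  · exact absurd (pow_one p) hcp
  · rfl

end Equiv.Perm

section WreathProduct

variable {A B : Type*} [AddCommGroup B]

def fiberShift (f : A → B) : Perm (A × B) :=
  Equiv.prodShear (Equiv.refl A) fun a => Equiv.addRight (f a)

@[simp]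
theorem fiberShift_apply (f : A → B) (y : A × B) : fiberShift f y = (y.1, y.2 + f y.1) :=
  rfl

theorem fiberShift_zero : fiberShift (0 : A → B) = 1 :=
  Equiv.ext fun y => by simp

theorem fiberShift_add (f g : A → B) : fiberShift (f + g) = fiberShift f * fiberShift g :=
  Equiv.ext fun y => by simp [add_assoc, add_comm (f y.1)]

theorem fiberShift_pow (f : A → B) (m : ℕ) : fiberShift f ^ m = fiberShift (m • f) := by
  induction m with
  | zero => simp [fiberShift_zero]
  | succ m ih => rw [pow_succ, ih, succ_nsmul, fiberShift_add]

theorem fiberShift_eq_one_iff {f : A → B} : fiberShift f = 1 ↔ f = 0 := by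
  refine ⟨fun h => funext fun a => ?_, fun h => h ▸ fiberShift_zero⟩
  simpa using congrArg (fun x : Perm (A × B) => (x (a, 0)).2) h

variable [AddCommGroup A]

variable (A B) in
def wreathSubgroup : Subgroup (Perm (A × B)) where
  carrier := {x | ∃ n : A, ∃ f : A → B, ∀ y, x y = (y.1 + n, y.2 + f y.1)}
  one_mem' := ⟨0, 0, fun y => by simp⟩
  mul_mem' := by
    rintro x x' ⟨n, f, hx⟩ ⟨n', f', hx'⟩
    refine ⟨n' + n, fun a => f' a + f (a + n'), fun y => ?_⟩
    simp only [Perm.mul_apply, hx', hx, Prod.mk.injEq]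
    constructor <;> abel
  inv_mem' := by
    rintro x ⟨n, f, hx⟩
    refine ⟨-n, fun a => -f (a - n), fun y => ?_⟩
    rw [Perm.inv_def, Equiv.symm_apply_eq, hx]
    simp [sub_eq_add_neg]

theorem pow_apply_of_forall_apply_eq {x : Perm (A × B)} {n : A} {f : A → B}
    (hx : ∀ y, x y = (y.1 + n, y.2 + f y.1)) (m : ℕ) (y : A × B) :
    (x ^ m) y = (y.1 + m • n, y.2 + ∑ k ∈ range m, f (y.1 + k • n)) := by
  induction m with
  | zero => simp
  | succ m ih =>
    rw [pow_succ', Perm.mul_apply, ih, hx, sum_range_succ, succ_nsmul]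
    simp only [Prod.mk.injEq]
    constructor <;> abel

theorem support_eq_univ_of_forall_apply_eq [Fintype A] [Fintype B] [DecidableEq A]
    [DecidableEq B] {x : Perm (A × B)} {n : A} {f : A → B} (hn : n ≠ 0)
    (hx : ∀ y, x y = (y.1 + n, y.2 + f y.1)) : x.support = univ :=
  eq_univ_of_forall fun y => Perm.mem_support.mpr fun h => hn <| by
    simpa [hx] using congrArg Prod.fst h

end WreathProduct

section ZMod

variable {p : ℕ}

theorem sum_range_add_nsmul [Fact p.Prime] {M : Type*} [AddCommMonoid M] {n : ZMod p}
    (hn : n ≠ 0) (f : ZMod p → M) (b : ZMod p) :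
    ∑ k ∈ range p, f (b + k • n) = ∑ a, f a := by
  rw [sum_range]
  refine Fintype.sum_bijective (fun k : Fin p => b + (k : ℕ) • n) ?_ _ _ fun _ => rfl
  rw [Fintype.bijective_iff_injective_and_card, ZMod.card, Fintype.card_fin]
  refine ⟨fun i j hij => Fin.ext ?_, rfl⟩
  simp only [add_right_inj, nsmul_eq_mul, mul_left_inj' hn] at hij
  rwa [ZMod.natCast_eq_natCast_iff', Nat.mod_eq_of_lt i.2, Nat.mod_eq_of_lt j.2] at hij

theorem pow_prime_eq_fiberShift [Fact p.Prime] {x : Perm (ZMod p × ZMod p)} {n : ZMod p}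
    {f : ZMod p → ZMod p} (hn : n ≠ 0) (hx : ∀ y, x y = (y.1 + n, y.2 + f y.1)) :
    x ^ p = fiberShift fun _ => ∑ a, f a :=
  Equiv.ext fun y => by
    rw [pow_apply_of_forall_apply_eq hx, sum_range_add_nsmul hn]
    simp [nsmul_eq_mul]

theorem Ssub_le_wreathSubgroup : Ssub p ≤ wreathSubgroup (ZMod p) (ZMod p) := by
  rw [Ssub, Subgroup.closure_le]
  rintro x (rfl | ⟨i, rfl⟩)
  · exact ⟨1, 0, fun y => by simp [tau, Prod.map, add_comm]⟩
  · refine ⟨0, Pi.single i 1, fun y => ?_⟩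
    by_cases h : y.1 = i <;> simp [sigma, h]

theorem sigma_eq_fiberShift (i : ZMod p) : sigma p i = fiberShift (Pi.single i 1) :=
  Equiv.ext fun y => by by_cases h : y.1 = i <;> simp [sigma, h]

theorem fiberShift_mem_Ksub [NeZero p] (f : ZMod p → ZMod p) : fiberShift f ∈ Ksub p := by
  rw [← univ_sum_single f]
  refine sum_induction _ (fun g : ZMod p → ZMod p => fiberShift g ∈ Ksub p)
    (fun g h hg hh => fiberShift_add g h ▸ mul_mem hg hh)
    (by rw [fiberShift_zero]; exact one_mem _) fun i _ => ?_
  have hsingle : (Pi.single i (f i) : ZMod p → ZMod p) = (f i).val • Pi.single i 1 := by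
    rw [← Pi.single_smul, nsmul_eq_mul, ZMod.natCast_zmod_val, mul_one]
  rw [hsingle, ← fiberShift_pow, ← sigma_eq_fiberShift]
  exact pow_mem (Subgroup.subset_closure (Set.mem_range_self i)) _

end ZMod

/-- every element of S − K is a p²-cycle or a product of p disjoint p-cycles. -/
theorem stmt1 (p : ℕ) [Fact p.Prime] :
    ∀ x : Equiv.Perm (ZMod p × ZMod p), x ∈ Ssub p → x ∉ Ksub p →
      x.cycleType = {p ^ 2} ∨ x.cycleType = Multiset.replicate p p := by
  intro x hxS hxK
  obtain ⟨n, f, hx⟩ := Ssub_le_wreathSubgroup hxS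
  have hn : n ≠ 0 := by
    rintro rfl
    exact hxK (by convert fiberShift_mem_Ksub f; ext1 y; simp [hx])
  have hcard : #x.support = p ^ 2 := by
    rw [support_eq_univ_of_forall_apply_eq hn hx, card_univ, Fintype.card_prod, ZMod.card, sq]
  have hxp := pow_prime_eq_fiberShift hn hx
  by_cases hc : ∑ a, f a = 0
  · right
    have hxp1 : x ^ p = 1 := by rw [hxp, hc]; exact fiberShift_zero
    rw [Perm.cycleType_eq_replicate_of_pow_prime_eq_one hxp1, hcard, sq,
      Nat.mul_div_cancel _ (Nat.Prime.pos Fact.out)]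
  · left
    have hxpp : x ^ p ^ 2 = 1 := by
      rw [sq, pow_mul, hxp, fiberShift_pow, fiberShift_eq_one_iff]
      ext; simp [nsmul_eq_mul]
    have hxp1 : x ^ p ≠ 1 := by
      rw [hxp, Ne, fiberShift_eq_one_iff, funext_iff]
      simpa using hc
    rw [(Perm.isCycle_of_pow_prime_sq_eq_one hxpp hxp1 hcard.le).cycleType, hcard]
end

section
/- For x = σ_0^{a_0}⋯σ_{p−1}^{a_{p−1}} τ^a in S − K (so a ≢ 0 mod p), write λ(x) = a_0 + ⋯ + a_{p−1} and μ(x) = a. Two elements x, y ∈ S − K are conjugate in S if and only if μ(x) = μ(y) and λ(x) ≡ λ(y) (mod p). -/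
/-!
Conjugating `σ^a τ^b` by `σ^e τ^g` gives `σ^{a'} τ^b` with
`a' t = a (t - g) + e t - e (t - b)`. The shift by `g` preserves `∑ a`, and the backward
difference `e t - e (t - b)` has sum zero, so `μ` and `λ` are conjugacy invariants. Conversely,
since `b` generates `ZMod p`, every function with sum zero is such a backward difference, so
`e` can be chosen to turn `a` into any `c` with the same sum.
-/

/-- The element `σ₀^{a 0} ⋯ σ_{p-1}^{a (p-1)} · τ^b` of the Sylow `p`-subgroup
`S = Z/p ≀ Z/p ≤ Σ_{p²}`, acting on `{1,…,p²}` identified with `ZMod p × ZMod p`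
via `lp + (k+1) ↦ (l, k)`.  It sends `(l,k)` to `(l + b, k + a (l + b))`. -/
def elt (p : ℕ) (a : ZMod p → ZMod p) (b : ZMod p) : Equiv.Perm (ZMod p × ZMod p) where
  toFun x := (x.1 + b, x.2 + a (x.1 + b))
  invFun x := (x.1 - b, x.2 - a x.1)
  left_inv x := by simp
  right_inv x := by simp

open Finset

namespace ZMod

variable {n : ℕ} [NeZero n] {M : Type*} [AddCommGroup M]

theorem sum_range_natCast (f : ZMod n → M) : ∑ j ∈ range n, f j = ∑ i, f i :=
  sum_nbij' (fun j ↦ (j : ZMod n)) val (by simp) (fun i _ ↦ mem_range.2 i.val_lt)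
    (fun _ hj ↦ val_cast_of_lt (mem_range.1 hj)) (fun i _ ↦ natCast_zmod_val i) (fun _ _ ↦ rfl)

/-- The partial sums `t ↦ ∑_{j ≤ t.val} f j` work; the wrap-around at `t = 0` is harmless
because the sum over a full period vanishes. -/
theorem exists_sub_comp_sub_one_eq (f : ZMod n → M) (hf : ∑ i, f i = 0) :
    ∃ e : ZMod n → M, ∀ t, e t - e (t - 1) = f t := by
  refine ⟨fun t ↦ ∑ j ∈ range (t.val + 1), f j, fun t ↦ ?_⟩
  by_cases ht : t = 0
  · obtain ⟨k, rfl⟩ := Nat.exists_eq_add_one_of_ne_zero (NeZero.ne n)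
    simp only [ht, zero_sub, val_neg_one, val_zero, sum_range_natCast, hf]
    simp
  · obtain ⟨m, hm⟩ := Nat.exists_eq_add_one_of_ne_zero ((val_ne_zero t).2 ht)
    have ht' : ((m + 1 : ℕ) : ZMod n) = t := by rw [← hm, natCast_zmod_val]
    have hm' : (t - 1).val = m := by
      rw [← ht', Nat.cast_succ, add_sub_cancel_right]
      exact val_cast_of_lt (by have := t.val_lt; omega)
    simp only [hm, hm', sum_range_succ _ (m + 1), add_sub_cancel_left, ht']

theorem exists_sub_comp_sub_eq {p : ℕ} [Fact p.Prime] {b : ZMod p} (hb : b ≠ 0)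
    (f : ZMod p → M) (hf : ∑ i, f i = 0) : ∃ e : ZMod p → M, ∀ t, e t - e (t - b) = f t := by
  obtain ⟨e, he⟩ := exists_sub_comp_sub_one_eq (fun s ↦ f (s * b))
    (Equiv.sum_comp (Equiv.mulRight₀ b hb) f |>.trans hf)
  refine ⟨fun t ↦ e (t * b⁻¹), fun t ↦ ?_⟩
  simpa [sub_mul, mul_inv_cancel₀ hb, inv_mul_cancel_right₀ hb] using he (t * b⁻¹)

end ZMod

section WreathProduct

variable {p : ℕ}

theorem elt_eq_elt_iff {a c : ZMod p → ZMod p} {b d : ZMod p} :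
    elt p a b = elt p c d ↔ a = c ∧ b = d := by
  refine ⟨fun h ↦ ?_, by rintro ⟨rfl, rfl⟩; rfl⟩
  have hx : ∀ x, elt p a b x = elt p c d x := fun x ↦ congrArg (· x) h
  have hbd : b = d := by simpa [elt] using congrArg Prod.fst (hx 0)
  subst hbd
  refine ⟨funext fun t ↦ ?_, rfl⟩
  simpa [elt] using congrArg Prod.snd (hx (t - b, 0))

theorem elt_conj (a e : ZMod p → ZMod p) (b g : ZMod p) :
    elt p e g * elt p a b * (elt p e g)⁻¹ = elt p (fun t ↦ a (t - g) + e t - e (t - b)) b := by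
  ext x <;>
  · simp only [elt, Equiv.Perm.mul_apply, Equiv.Perm.inv_def, Equiv.coe_fn_mk,
      Equiv.coe_fn_symm_mk]
    ring_nf

end WreathProduct

theorem stmt2_general (p : ℕ) [Fact p.Prime] (a c : ZMod p → ZMod p) (b d : ZMod p)
    (hb : b ≠ 0) :
    (∃ (e : ZMod p → ZMod p) (g : ZMod p),
        elt p e g * elt p a b * (elt p e g)⁻¹ = elt p c d) ↔
      (b = d ∧ ∑ i : ZMod p, a i = ∑ i : ZMod p, c i) := by
  simp only [elt_conj, elt_eq_elt_iff]
  constructor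
  · rintro ⟨e, g, rfl, rfl⟩
    have sum_shift (f : ZMod p → ZMod p) (s : ZMod p) : ∑ t, f (t - s) = ∑ t, f t :=
      Equiv.sum_comp (Equiv.subRight s) f
    refine ⟨rfl, ?_⟩
    rw [sum_sub_distrib, sum_add_distrib, sum_shift, sum_shift, add_sub_cancel_right]
  · rintro ⟨rfl, hsum⟩
    obtain ⟨e, he⟩ := ZMod.exists_sub_comp_sub_eq hb (fun t ↦ c t - a t)
      (by rw [sum_sub_distrib, hsum, sub_self])
    exact ⟨e, 0, funext fun t ↦ by simp only [sub_zero, add_sub_assoc, he, add_sub_cancel], rfl⟩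

/-- two elements `x = σ^a τ^b`, `y = σ^c τ^d` of `S − K` are conjugate in `S`
iff `μ(x) = μ(y)` and `λ(x) ≡ λ(y) (mod p)`.  (Every element of `S` is of the form
`elt e g`, so conjugacy in `S` is conjugacy by some `elt e g`.) -/
theorem stmt2 (p : ℕ) [Fact p.Prime] (a c : ZMod p → ZMod p) (b d : ZMod p)
    (hb : b ≠ 0) (hd : d ≠ 0) :
    (∃ (e : ZMod p → ZMod p) (g : ZMod p),
        elt p e g * elt p a b * (elt p e g)⁻¹ = elt p c d) ↔
      (b = d ∧ ∑ i : ZMod p, a i = ∑ i : ZMod p, c i) :=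
  stmt2_general p a c b d hb
end

section
/- Let D_8 be the dihedral group of order 8 with generators r (order 4) and s (order 2, srs = r^{−1}), viewed inside Σ_4 via r = (1,4,2,3), s = (1,2). Let 1, X, Y, XY, Z be the irreducible complex representations of D_8, where X, Y, XY are the nontrivial one-dimensional representations with kernels ⟨r⟩, ⟨s, r²⟩, ⟨sr, r²⟩ respectively and Z is the 2-dimensional irreducible. Then a virtual representation a·1 + b·X + c·Y + d·XY + e·Z of D_8 is Σ_4-invariant if and only if e = b + c. In particular {1, XY, X+Z, Y+Z} is a Z-basis of the group R_{Σ_4}(D_8) of Σ_4-invariant virtual representations. -/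
/-- The generator `r = (1,4,2,3)` of `D₈ ≤ Σ₄` (0-indexed: `(0,3,1,2)`). -/
def rD : Equiv.Perm (Fin 4) := c[0, 3, 1, 2]
/-- The generator `s = (1,2)` of `D₈ ≤ Σ₄`. -/
def sD : Equiv.Perm (Fin 4) := c[0, 1]

/-- The element `r^k s^j` of `D₈ = {r^k s^j}`, as a permutation in `Σ₄`. -/
def dElt (k : ZMod 4) (j : ZMod 2) : Equiv.Perm (Fin 4) := rD ^ k.val * sD ^ j.val

/-- The value at `r^k s^j` of the virtual character `a·1 + b·X + c·Y + d·XY + e·Z` of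
`D₈`, where `X, Y, XY` are the nontrivial one-dimensional representations with kernels
`⟨r⟩, ⟨s,r²⟩, ⟨sr,r²⟩` and `Z` is the two-dimensional irreducible representation. -/
def chiD8 (a b c d e : ℤ) (k : ZMod 4) (j : ZMod 2) : ℤ :=
  a + b * (-1) ^ j.val + c * (-1) ^ k.val + d * (-1) ^ (k.val + j.val) +
    e * (if j = 0 then (if k = 0 then 2 else if k = 2 then -2 else 0) else 0)

/-!
Two elements of `Σ₄` are conjugate iff they have the same cycle type. On `D₈` the cycle type
separates the identity, `r^{±1}`, `{s, sr²}` and `{r², sr, sr³}`; every virtual character of `D₈`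
already agrees on `r^{±1}`, on `s, sr²` and on `sr, sr³`, so invariance only asks for agreement on
`r²` and `sr³`, which reads `2e = 2(b + c)`. An invariant character is then
`a·1 + d·XY + b·(X + Z) + c·(Y + Z)`, with unique coefficients because the irreducible
characters of `D₈` are linearly independent.
-/

def IsS4Invariant (χ : ZMod 4 → ZMod 2 → ℤ) : Prop :=
  ∀ (k k' : ZMod 4) (j j' : ZMod 2), IsConj (dElt k j) (dElt k' j') → χ k j = χ k' j'

lemma cycleType_dElt (k : ZMod 4) (j : ZMod 2) :
    (dElt k j).cycleType =
      if j = 0 then (if k = 0 then 0 else if k = 2 then {2, 2} else {4})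
      else if k = 0 ∨ k = 2 then {2} else {2, 2} := by
  revert k j
  decide

/-- The value on each cycle type of the `Σ₄`-class function restricting to
`a·1 + b·(X + Z) + c·(Y + Z) + d·XY`. -/
def s4ClassValue (a b c d : ℤ) (t : Multiset ℕ) : ℤ :=
  if t = 0 then a + 3 * b + 3 * c + d
  else if t = {4} then a + b - c - d
  else if t = {2} then a - b + c - d
  else a - b - c + d

lemma chiD8_eq_s4ClassValue (a b c d : ℤ) (k : ZMod 4) (j : ZMod 2) :
    chiD8 a b c d (b + c) k j = s4ClassValue a b c d (dElt k j).cycleType := by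
  rw [cycleType_dElt]
  obtain rfl | rfl | rfl | rfl : k = 0 ∨ k = 1 ∨ k = 2 ∨ k = 3 := by revert k; decide
  all_goals obtain rfl | rfl : j = 0 ∨ j = 1 := by revert j; decide
  all_goals
    simp +decide [chiD8, s4ClassValue, ZMod.val_ofNat, ZMod.val_one_eq_one_mod]
    ring

lemma isConj_dElt_two_zero_three_one : IsConj (dElt 2 0) (dElt 3 1) :=
  isConj_iff.mpr ⟨c[1, 3, 2], by decide⟩

lemma chiD8_two_zero_sub_three_one (a b c d e : ℤ) :
    chiD8 a b c d e 2 0 - chiD8 a b c d e 3 1 = 2 * (b + c - e) := by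
  simp +decide [chiD8, ZMod.val_ofNat, ZMod.val_one_eq_one_mod]
  ring

lemma isS4Invariant_chiD8_iff (a b c d e : ℤ) : IsS4Invariant (chiD8 a b c d e) ↔ e = b + c := by
  constructor
  · intro h
    have hdiff := chiD8_two_zero_sub_three_one a b c d e
    rw [h 2 3 0 1 isConj_dElt_two_zero_three_one, sub_self] at hdiff
    omega
  · rintro rfl k k' j j' hconj
    rw [chiD8_eq_s4ClassValue, chiD8_eq_s4ClassValue,
      Equiv.Perm.isConj_iff_cycleType_eq.mp hconj]

lemma chiD8_basis_combination (n₁ n₂ n₃ n₄ : ℤ) (k : ZMod 4) (j : ZMod 2) :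
    n₁ * chiD8 1 0 0 0 0 k j + n₂ * chiD8 0 0 0 1 0 k j + n₃ * chiD8 0 1 0 0 1 k j +
      n₄ * chiD8 0 0 1 0 1 k j = chiD8 n₁ n₃ n₄ n₂ (n₃ + n₄) k j := by
  unfold chiD8
  split_ifs <;> ring

lemma chiD8_coeffs_eq_of_eq {a b c d e a' b' c' d' e' : ℤ}
    (h : ∀ k j, chiD8 a b c d e k j = chiD8 a' b' c' d' e' k j) :
    a = a' ∧ b = b' ∧ c = c' ∧ d = d' ∧ e = e' := by
  have h₀₀ := h 0 0
  have h₁₀ := h 1 0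
  have h₂₀ := h 2 0
  have h₀₁ := h 0 1
  have h₁₁ := h 1 1
  simp +decide [chiD8, ZMod.val_ofNat, ZMod.val_one_eq_one_mod] at h₀₀ h₁₀ h₂₀ h₀₁ h₁₁
  omega

/-- a virtual representation `a·1 + b·X + c·Y + d·XY + e·Z` of
`D₈ ≤ Σ₄` is `Σ₄`-invariant (its character is constant on `Σ₄`-conjugacy classes
intersected with `D₈`) iff `e = b + c`; and `{1, XY, X+Z, Y+Z}` is a `ℤ`-basis of the
group of `Σ₄`-invariant virtual representations. -/
theorem stmt19 :
    (∀ a b c d e : ℤ,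
      ((∀ (k k' : ZMod 4) (j j' : ZMod 2), IsConj (dElt k j) (dElt k' j') →
          chiD8 a b c d e k j = chiD8 a b c d e k' j') ↔ e = b + c)) ∧
    (∀ a b c d e : ℤ,
      (∀ (k k' : ZMod 4) (j j' : ZMod 2), IsConj (dElt k j) (dElt k' j') →
          chiD8 a b c d e k j = chiD8 a b c d e k' j') →
        ∃! n : ℤ × ℤ × ℤ × ℤ, ∀ (k : ZMod 4) (j : ZMod 2),
          chiD8 a b c d e k j =
            n.1 * chiD8 1 0 0 0 0 k j + n.2.1 * chiD8 0 0 0 1 0 k j +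
              n.2.2.1 * chiD8 0 1 0 0 1 k j + n.2.2.2 * chiD8 0 0 1 0 1 k j) := by
  refine ⟨isS4Invariant_chiD8_iff, fun a b c d e hinv => ?_⟩
  obtain rfl := (isS4Invariant_chiD8_iff a b c d e).mp hinv
  refine ⟨(a, d, b, c), fun k j => (chiD8_basis_combination a d b c k j).symm, ?_⟩
  rintro ⟨n₁, n₂, n₃, n₄⟩ hn
  simp only [chiD8_basis_combination] at hn
  obtain ⟨rfl, rfl, rfl, rfl, -⟩ := chiD8_coeffs_eq_of_eq hn
  rfl
end
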